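/- For all real ε with 0 < ε < 1/2, the strict inequality log₂(1 + (1−2ε)⁴) < (1 + log₂(ε² + (1−ε)²))² holds. -/

import Mathlib

/-!
With `y = (1 - 2ε)²` we have `1 + log₂ (ε² + (1 - ε)²) = log₂ (1 + y)`, and the claim becomes
`log 2 · log (1 + y²) < log (1 + y)²`. For `φ t = log (1 + exp t)` and `y = exp x` this is
`φ 0 · φ (2x) < φ x ²`, an instance of the strict log-concavity of `φ`. The derivative of `log ∘ φ`
is `u / ((1 + u) log (1 + u))` with `u = exp t`: the reciprocal of the slope of the strictly convex
`v ↦ v log v` between `1` and `1 + u`, hence strictly decreasing.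
-/

open Real Set

theorem strictAntiOn_div_one_add_mul_log_one_add :
    StrictAntiOn (fun u : ℝ => u / ((1 + u) * log (1 + u))) (Ioi 0) := by
  intro u (hu : 0 < u) v (hv : 0 < v) huv
  have slope_eq : ∀ w : ℝ, (1 + w) * log (1 + w) / w =
      ((1 + w) * log (1 + w) - 1 * log 1) / ((1 + w) - 1) := by
    intro w; simp
  have slope_lt : (1 + u) * log (1 + u) / u < (1 + v) * log (1 + v) / v := by
    rw [slope_eq, slope_eq]
    exact strictConvexOn_mul_log.secant_strict_mono (mem_Ici.2 zero_le_one)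
      (mem_Ici.2 (by linarith)) (mem_Ici.2 (by linarith)) (by linarith) (by linarith)
      (by linarith)
  have slope_pos : 0 < (1 + u) * log (1 + u) / u := by
    have := log_pos (by linarith : (1 : ℝ) < 1 + u)
    positivity
  simpa only [one_div_div] using one_div_lt_one_div_of_lt slope_pos slope_lt

theorem hasDerivAt_log_log_one_add_exp (x : ℝ) :
    HasDerivAt (fun t => log (log (1 + exp t)))
      (exp x / ((1 + exp x) * log (1 + exp x))) x := by
  have h_one_lt : 1 < 1 + exp x := lt_add_of_pos_right 1 (exp_pos x)
  rw [← div_div]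
  exact (((hasDerivAt_exp x).const_add 1).log (by linarith)).log (log_pos h_one_lt).ne'

theorem strictConcaveOn_log_log_one_add_exp :
    StrictConcaveOn ℝ univ (fun t => log (log (1 + exp t))) := by
  refine StrictAnti.strictConcaveOn_univ_of_deriv
    (continuous_iff_continuousAt.2 fun x => (hasDerivAt_log_log_one_add_exp x).continuousAt) ?_
  intro a b hab
  simp only [(hasDerivAt_log_log_one_add_exp _).deriv]
  exact strictAntiOn_div_one_add_mul_log_one_add (exp_pos a) (exp_pos b) (exp_lt_exp.2 hab)

theorem log_two_mul_log_one_add_sq_lt_sq_log_one_add {y : ℝ} (hy : 0 < y) (hy1 : y ≠ 1) :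
    log 2 * log (1 + y ^ 2) < log (1 + y) ^ 2 := by
  set x := log y
  have hx : x ≠ 0 := log_ne_zero_of_pos_of_ne_one hy hy1
  have midpoint := strictConcaveOn_log_log_one_add_exp.2 (mem_univ (2 * x)) (mem_univ 0)
    (by simpa using hx) one_half_pos one_half_pos (add_halves 1)
  have hex : exp x = y := exp_log hy
  have h2x : exp (2 * x) = y ^ 2 := by rw [two_mul, exp_add, hex, sq]
  simp only [smul_eq_mul, mul_zero, add_zero, exp_zero, h2x,
    show 1 / 2 * (2 * x) = x by ring, hex] at midpoint
  norm_num at midpoint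
  have hL2 : 0 < log 2 := log_pos one_lt_two
  have hLy : 0 < log (1 + y) := log_pos (by linarith)
  have hLy2 : 0 < log (1 + y ^ 2) := log_pos (lt_add_of_pos_right 1 (by positivity))
  rw [← log_lt_log_iff (by positivity) (by positivity), log_mul hL2.ne' hLy2.ne', log_pow]
  push_cast
  linarith

theorem logb_two_one_add_sq_lt_sq_logb_two_one_add {y : ℝ} (hy : 0 < y) (hy1 : y ≠ 1) :
    logb 2 (1 + y ^ 2) < logb 2 (1 + y) ^ 2 := by
  have hL2 : 0 < log 2 := log_pos one_lt_two
  rw [logb, logb, div_pow, div_lt_div_iff₀ hL2 (by positivity), sq (log 2), ← mul_assoc]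
  exact mul_lt_mul_of_pos_right
    (by linarith [log_two_mul_log_one_add_sq_lt_sq_log_one_add hy hy1]) hL2

theorem stmt15 (ε : ℝ) (h0 : 0 < ε) (h1 : ε < 1 / 2) :
    Real.logb 2 (1 + (1 - 2 * ε) ^ 4) <
      (1 + Real.logb 2 (ε ^ 2 + (1 - ε) ^ 2)) ^ 2 := by
  set y : ℝ := (1 - 2 * ε) ^ 2
  have hy : 0 < y := pow_pos (by linarith) 2
  have hy1 : y ≠ 1 := by nlinarith
  have h_quartic : 1 + (1 - 2 * ε) ^ 4 = 1 + y ^ 2 := by ring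
  have h_doubling : 1 + logb 2 (ε ^ 2 + (1 - ε) ^ 2) = logb 2 (1 + y) := by
    rw [show ε ^ 2 + (1 - ε) ^ 2 = (1 + y) / 2 by ring, logb_div (by positivity) two_ne_zero,
      logb_self_eq_one one_lt_two]
    ring
  rw [h_quartic, h_doubling]
  exact logb_two_one_add_sq_lt_sq_logb_two_one_add hy hy1
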